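/- For every n ≥ 1 and every subset I ⊆ {1,...,n−1}, the number of cyclic permutations π of {1,...,n+1} with D(π) ∩ {1,...,n−1} ⊆ I equals the number of permutations σ of {1,...,n} with D(σ) ⊆ I. -/

import Mathlib

def descSeq {n : ℕ} (f : Fin n → ℕ) : Finset ℕ :=
  (Finset.range (n - 1)).filter
    (fun i => ∃ h : i + 1 < n, f ⟨i + 1, h⟩ < f ⟨i, Nat.lt_of_succ_lt h⟩)

def descSet {n : ℕ} (σ : Equiv.Perm (Fin n)) : Finset ℕ :=
  descSeq (fun i => (σ i : ℕ))

def IsCyclic' {n : ℕ} (π : Equiv.Perm (Fin n)) : Prop :=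
  ∀ x y : Fin n, ∃ k : ℕ, (π ^ k) x = y

def compParts (n : ℕ) (I : Finset ℕ) : Multiset ℕ :=
  ↑(List.zipWith (· - ·) ((I.sort (· ≤ ·)).map (· + 1) ++ [n])
      (0 :: (I.sort (· ≤ ·)).map (· + 1)))

def fullCycleType {n : ℕ} (π : Equiv.Perm (Fin n)) : Multiset ℕ :=
  π.cycleType + Multiset.replicate (n - π.support.card) 1

def InT0 (n : ℕ) (τ : Fin n → ℕ) : Prop :=
  ∃ (π : Equiv.Perm (Fin n)) (k : Fin n), IsCyclic' π ∧
    τ = Function.update (fun i => ((π i : ℕ) + 1)) k 0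

def InU (n : ℕ) (τ : Fin n → ℕ) : Prop :=
  ∃ (π : Equiv.Perm (Fin n)) (k : Fin n), IsCyclic' π ∧
    τ = Function.update (fun i => ((π i : ℕ) + 1)) k (n + 1)

def extPerm {n : ℕ} (π : Equiv.Perm (Fin n)) : Equiv.Perm (Fin (n + 1)) :=
  (finSuccEquivLast (n := n)).symm.permCongr π.optionCongr

def extCycle {n : ℕ} (π : Equiv.Perm (Fin n)) (k : Fin n) : Equiv.Perm (Fin (n + 1)) :=
  extPerm π * Equiv.swap (Fin.castSucc k) (Fin.last n)

open Finset Function Equiv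

/-! A permutation `σ` of `Fin n` with descents in `I` is one that increases on each block of
consecutive positions cut out by `I`. Labelling each value by the block of its position turns
these `σ` bijectively into the words with a fixed content (the multiset of block labels);
sorting the word recovers `σ`.

For a cyclic `π` of `Fin (n + 1)`, give the last position a block of its own with the largest
label `n`. Reading the labels along the orbit of the last point gives a word of the same
content, preceded by `n`. Conversely, sorting the rotations of a word lexicographically and
stepping each rotation to the next defines a cyclic permutation (a case of the
Gessel–Reutenauer correspondence). Since the letter `n` occurs once, the rotations are distinct,
and moving a common first letter of two rotations to their ends preserves their order, so this
permutation increases on each block. The two constructions are inverse because,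
for `π` increasing on blocks, the label sequences along the orbits of points `x < y` compare
lexicographically as `x` and `y` do. Both sides of the theorem thus count the same words. -/

theorem eq_of_monotone_of_map_eq {m : ℕ} {f g : Fin m → ℕ} (hf : Monotone f) (hg : Monotone g)
    (h : univ.val.map f = univ.val.map g) : f = g := by
  apply List.ofFn_injective
  refine List.Perm.eq_of_sortedLE hf.sortedLE_ofFn hg.sortedLE_ofFn ?_
  rwa [← Multiset.coe_eq_coe, ← Fin.univ_val_map, ← Fin.univ_val_map]

theorem comp_sort_eq_of_map_eq {m : ℕ} {w β : Fin m → ℕ} (hβ : Monotone β)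
    (hw : univ.val.map w = univ.val.map β) : w ∘ Tuple.sort w = β :=
  eq_of_monotone_of_map_eq (Tuple.monotone_sort w) hβ
    (by rw [← Multiset.map_map, Multiset.map_univ_val_equiv, hw])

section Tuples

variable {n : ℕ}

theorem map_univ_cons (a : ℕ) (w : Fin n → ℕ) :
    univ.val.map (Fin.cons a w : Fin (n + 1) → ℕ) = a ::ₘ univ.val.map w := by
  simp [Fin.univ_val_map, List.ofFn_succ]

theorem map_univ_snoc (w : Fin n → ℕ) (a : ℕ) :
    univ.val.map (Fin.snoc w a : Fin (n + 1) → ℕ) = a ::ₘ univ.val.map w := by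
  rw [Fin.univ_val_map, List.ofFn_succ']
  simp [Fin.univ_val_map]

theorem monotone_snoc {w : Fin n → ℕ} {a : ℕ} (hw : Monotone w) (ha : ∀ v, w v ≤ a) :
    Monotone (Fin.snoc w a : Fin (n + 1) → ℕ) := by
  intro p q hpq
  induction q using Fin.lastCases with
  | last => induction p using Fin.lastCases <;> simp [ha]
  | cast j =>
    induction p using Fin.lastCases with
    | last => exact absurd hpq (not_le.2 (Fin.castSucc_lt_last j))
    | cast i => simpa using hw (Fin.castSucc_le_castSucc_iff.1 hpq)

end Tuples

section Cyclic

variable {m : ℕ} {π : Perm (Fin m)}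

theorem IsCyclic'.minimalPeriod_eq (hπ : IsCyclic' π) (x : Fin m) : minimalPeriod π x = m := by
  have hpos := minimalPeriod_pos_of_mem_periodicPts (π.injective.mem_periodicPts x)
  refine le_antisymm (by simpa using minimalPeriod_le_card (f := π) (x := x)) ?_
  have hsurj : Surjective fun k : Fin (minimalPeriod π x) => π^[k] x := by
    intro y
    obtain ⟨k, rfl⟩ := hπ x y
    exact ⟨⟨k % _, Nat.mod_lt _ hpos⟩, by simp [iterate_mod_minimalPeriod_eq, Perm.coe_pow]⟩
  simpa using Fintype.card_le_of_surjective _ hsurj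

theorem IsCyclic'.pow_card_eq_one (hπ : IsCyclic' π) : π ^ m = 1 := by
  refine Equiv.ext fun x => ?_
  have hx := iterate_minimalPeriod (f := π) (x := x)
  rwa [hπ.minimalPeriod_eq x, ← Perm.coe_pow] at hx

theorem IsCyclic'.injective_pow_apply (hπ : IsCyclic' π) (x : Fin m) :
    Injective fun t : Fin m => (π ^ (t : ℕ)) x := by
  intro s t hst
  simp only [Perm.coe_pow] at hst
  exact Fin.ext (iterate_injOn_Iio_minimalPeriod (by simp [hπ.minimalPeriod_eq])
    (by simp [hπ.minimalPeriod_eq]) hst)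

theorem IsCyclic'.surjective_pow_apply (hπ : IsCyclic' π) (x : Fin m) :
    Surjective fun t : Fin m => (π ^ (t : ℕ)) x :=
  Finite.injective_iff_surjective.1 (hπ.injective_pow_apply x)

theorem IsCyclic'.pow_val_add (hπ : IsCyclic' π) (t s : Fin m) :
    π ^ ((t + s : Fin m) : ℕ) = π ^ (s : ℕ) * π ^ (t : ℕ) := by
  rw [Fin.val_add, ← pow_eq_pow_mod _ hπ.pow_card_eq_one, ← pow_add, add_comm]

theorem IsCyclic'.pow_val_one {n : ℕ} {π : Perm (Fin (n + 1))} (hπ : IsCyclic' π) :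
    π ^ ((1 : Fin (n + 1)) : ℕ) = π := by
  rw [Fin.val_one', ← pow_eq_pow_mod _ hπ.pow_card_eq_one, pow_one]

end Cyclic

section Fibers

variable {m : ℕ} {β : Fin m → ℕ}

def StrictMonoOnFibers (β : Fin m → ℕ) (g : Fin m → Fin m) : Prop :=
  ∀ ⦃p q : Fin m⦄, p < q → β p = β q → g p < g q

theorem strictMonoOnFibers_iff {g : Fin m → Fin m} (hβ : Monotone β) :
    StrictMonoOnFibers β g ↔ ∀ i (hi : i + 1 < m), β ⟨i, by omega⟩ = β ⟨i + 1, hi⟩ →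
      g ⟨i, by omega⟩ < g ⟨i + 1, hi⟩ := by
  refine ⟨fun h _ _ => h (Fin.lt_def.2 (Nat.lt_succ_self _)), fun h p q hpq hβpq => ?_⟩
  obtain ⟨k, hk⟩ : ∃ k, (q : ℕ) = p + k + 1 := ⟨q - p - 1, by omega⟩
  induction k generalizing q with
  | zero =>
    obtain ⟨q, hq⟩ := q
    subst hk
    exact h p _ hβpq
  | succ k ih =>
    obtain ⟨r, hr⟩ : ∃ r : Fin m, (r : ℕ) = p + k + 1 := ⟨⟨_, by omega⟩, rfl⟩
    have hpr : p < r := Fin.lt_def.2 (by omega)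
    have hrq : r < q := Fin.lt_def.2 (by omega)
    have hβr : β p = β r := le_antisymm (hβ hpr.le) (hβpq ▸ hβ hrq.le)
    obtain ⟨q, hq⟩ := q
    obtain rfl : q = r + 1 := by simp only at hk; omega
    exact (ih r hpr hβr hr).trans (h r _ (hβr ▸ hβpq))

theorem StrictMonoOnFibers.pow_apply_lt {π : Perm (Fin m)} (hπ : StrictMonoOnFibers β π)
    {x y : Fin m} (hxy : x < y) (k : ℕ) (hk : ∀ j < k, β ((π ^ j) x) = β ((π ^ j) y)) :
    (π ^ k) x < (π ^ k) y := by
  induction k with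
  | zero => exact hxy
  | succ k ih =>
    rw [pow_succ', Perm.mul_apply, Perm.mul_apply]
    exact hπ (ih fun j hj => hk j (by omega)) (hk k (by omega))

noncomputable def permsEquivWords (hβ : Monotone β) :
    {σ : Perm (Fin m) // StrictMonoOnFibers β σ} ≃
      {w : Fin m → ℕ // univ.val.map w = univ.val.map β} where
  toFun σ := ⟨β ∘ σ.1.symm, by rw [← Multiset.map_map, Multiset.map_univ_val_equiv]⟩
  invFun w := ⟨Tuple.sort w.1, fun p q hpq hβpq => (Tuple.eq_sort_iff.1 rfl).2 p q hpq
    (by simpa [← comp_sort_eq_of_map_eq hβ w.2] using hβpq)⟩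
  left_inv σ := Subtype.ext (Tuple.eq_sort_iff.2
    ⟨by simpa [comp_assoc] using hβ, fun p q hpq h => σ.2 hpq (by simpa using h)⟩).symm
  right_inv w := Subtype.ext <| funext fun v => by
    simp [← comp_sort_eq_of_map_eq hβ w.2]

end Fibers

section Rotations

variable {n : ℕ} {c : Fin (n + 1) → ℕ}

def rotations (c : Fin (n + 1) → ℕ) (t : Fin (n + 1)) : Lex (Fin (n + 1) → ℕ) :=
  toLex fun s => c (t + s)

theorem rotations_injective (hc : ∀ t ≠ 0, c t < c 0) : Injective (rotations c) := by
  intro t t' h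
  have h' := congrFun (toLex_inj.1 h) (-t)
  simp only [add_neg_cancel] at h'
  by_contra hne
  exact (hc (t' + -t) (by rwa [Ne, add_neg_eq_zero, eq_comm])).ne' h'

theorem rotations_lt_rotations_zero (hc : ∀ t ≠ 0, c t < c 0) {t : Fin (n + 1)} (ht : t ≠ 0) :
    rotations c t < rotations c 0 :=
  ⟨0, fun j hj => absurd hj (Fin.not_lt_zero j), by simpa [rotations] using hc t ht⟩

theorem rotations_add_one_lt {t t' : Fin (n + 1)} (h0 : c t = c t')
    (h : rotations c t < rotations c t') : rotations c (t + 1) < rotations c (t' + 1) := by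
  obtain ⟨i, hj, hi⟩ := h
  simp only [rotations, Pi.toLex_apply] at hj hi
  obtain ⟨k, rfl⟩ : ∃ k : Fin n, k.succ = i :=
    Fin.exists_succ_eq.2 (by rintro rfl; simp [h0] at hi)
  refine ⟨k.castSucc, fun j hjk => ?_, ?_⟩
  · change j < k.castSucc at hjk
    have hlt : j + 1 < k.succ := by
      rw [Fin.lt_def, Fin.val_add_one_of_lt (hjk.trans (Fin.castSucc_lt_last k))]
      simpa [Fin.lt_def] using hjk
    simpa [rotations, add_assoc, add_comm 1 j] using hj _ hlt
  · have hk (u : Fin (n + 1)) : u + 1 + k.castSucc = u + k.succ := by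
      rw [add_assoc, add_comm 1, Fin.coeSucc_eq_succ]
    simpa [rotations, hk] using hi

/-- The rank (among the sorted rotations of `c`) of the rotation starting at `t` is sent to the
rank of the rotation starting at `t + 1`. -/
noncomputable def cycleOfWord (c : Fin (n + 1) → ℕ) : Perm (Fin (n + 1)) :=
  (Tuple.sort (rotations c)).trans ((Equiv.addRight 1).trans (Tuple.sort (rotations c)).symm)

theorem cycleOfWord_pow_apply (c : Fin (n + 1) → ℕ) (k x : Fin (n + 1)) :
    (cycleOfWord c ^ (k : ℕ)) x =
      (Tuple.sort (rotations c)).symm (Tuple.sort (rotations c) x + k) := by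
  induction k using Fin.induction with
  | zero => simp
  | succ k ih =>
    rw [Fin.val_succ, pow_succ', Perm.mul_apply, ← Fin.val_castSucc, ih]
    simp [cycleOfWord, add_assoc, Fin.coeSucc_eq_succ]

theorem isCyclic'_cycleOfWord (c : Fin (n + 1) → ℕ) : IsCyclic' (cycleOfWord c) := by
  intro x y
  refine ⟨(Tuple.sort (rotations c) y - Tuple.sort (rotations c) x : Fin (n + 1)), ?_⟩
  simp [cycleOfWord_pow_apply]

theorem sort_rotations_last (hc : ∀ t ≠ 0, c t < c 0) :
    Tuple.sort (rotations c) (Fin.last n) = 0 := by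
  by_contra h
  have hle := Tuple.monotone_sort (rotations c) (Fin.le_last ((Tuple.sort (rotations c)).symm 0))
  simp only [comp_apply, apply_symm_apply] at hle
  exact (rotations_lt_rotations_zero hc h).not_ge hle

theorem cycleOfWord_pow_apply_last (hc : ∀ t ≠ 0, c t < c 0) (k : Fin (n + 1)) :
    (cycleOfWord c ^ (k : ℕ)) (Fin.last n) = (Tuple.sort (rotations c)).symm k := by
  simp [cycleOfWord_pow_apply, sort_rotations_last hc]

theorem comp_sort_rotations {β : Fin (n + 1) → ℕ} (hβ : Monotone β)
    (hcβ : univ.val.map c = univ.val.map β) : c ∘ Tuple.sort (rotations c) = β := by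
  refine eq_of_monotone_of_map_eq (fun p q hpq => ?_) hβ ?_
  · have hle : rotations c (Tuple.sort (rotations c) p) ≤
        rotations c (Tuple.sort (rotations c) q) :=
      Tuple.monotone_sort (rotations c) hpq
    simpa using Pi.apply_le_of_toLex (i := 0) hle (fun j hj => absurd hj (Fin.not_lt_zero j))
  · rw [← Multiset.map_map, Multiset.map_univ_val_equiv, hcβ]

theorem strictMonoOnFibers_cycleOfWord {β : Fin (n + 1) → ℕ} (hc : ∀ t ≠ 0, c t < c 0)
    (hβ : Monotone β) (hcβ : univ.val.map c = univ.val.map β) :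
    StrictMonoOnFibers β (cycleOfWord c) := by
  intro p q hpq hβpq
  set e := Tuple.sort (rotations c)
  have h0 : c (e p) = c (e q) := by
    rw [← comp_apply (f := c), ← comp_apply (f := c) (g := e), comp_sort_rotations hβ hcβ, hβpq]
  have hrot : rotations c (e p) < rotations c (e q) :=
    (Tuple.monotone_sort (rotations c)).strictMono_of_injective
      ((rotations_injective hc).comp e.injective) hpq
  have key : (rotations c ∘ e) (cycleOfWord c p) < (rotations c ∘ e) (cycleOfWord c q) := by
    simp only [cycleOfWord, comp_apply, Equiv.trans_apply, coe_addRight, apply_symm_apply, e]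
    exact rotations_add_one_lt h0 hrot
  exact (Tuple.monotone_sort _).reflect_lt key

end Rotations

section Orbits

variable {n : ℕ} {β : Fin (n + 1) → ℕ} {π : Perm (Fin (n + 1))}

def wordOfCycle (β : Fin (n + 1) → ℕ) (π : Perm (Fin (n + 1))) (t : Fin (n + 1)) : ℕ :=
  β ((π ^ (t : ℕ)) (Fin.last n))

theorem wordOfCycle_zero : wordOfCycle β π 0 = β (Fin.last n) := by
  simp [wordOfCycle]

theorem map_wordOfCycle (hπ : IsCyclic' π) :
    univ.val.map (wordOfCycle β π) = univ.val.map β := by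
  let Ψ := Equiv.ofBijective _ ⟨hπ.injective_pow_apply (Fin.last n), hπ.surjective_pow_apply _⟩
  rw [show wordOfCycle β π = β ∘ Ψ from rfl, ← Multiset.map_map, Multiset.map_univ_val_equiv]

theorem rotations_wordOfCycle (hπ : IsCyclic' π) (t : Fin (n + 1)) :
    rotations (wordOfCycle β π) t =
      toLex fun s : Fin (n + 1) => β ((π ^ (s : ℕ)) ((π ^ (t : ℕ)) (Fin.last n))) := by
  simp [rotations, wordOfCycle, hπ.pow_val_add]

theorem strictMono_toLex_labels_orbit (hβ : Monotone β)
    (hlast : ∀ p ≠ Fin.last n, β p < β (Fin.last n)) (hπ : IsCyclic' π)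
    (hfib : StrictMonoOnFibers β π) :
    StrictMono fun x => toLex fun s : Fin (n + 1) => β ((π ^ (s : ℕ)) x) := by
  intro x y hxy
  rcases lt_trichotomy (toLex fun s : Fin (n + 1) => β ((π ^ (s : ℕ)) x))
    (toLex fun s : Fin (n + 1) => β ((π ^ (s : ℕ)) y)) with h | h | ⟨i, hj, hi⟩
  · exact h
  · obtain ⟨s, hs⟩ := hπ.surjective_pow_apply x (Fin.last n)
    have hys : (π ^ (s : ℕ)) y ≠ Fin.last n := hs ▸ ((π ^ (s : ℕ)).injective.ne hxy.ne')
    have hβs := congrFun (toLex_inj.1 h) s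
    simp only [hs] at hβs
    exact absurd hβs (hlast _ hys).ne'
  · have hlt := hfib.pow_apply_lt hxy i fun j hj' => (hj ⟨j, by omega⟩ hj').symm
    exact absurd (hβ hlt.le) (not_le.2 hi)

theorem cycleOfWord_wordOfCycle (hβ : Monotone β)
    (hlast : ∀ p ≠ Fin.last n, β p < β (Fin.last n)) (hπ : IsCyclic' π)
    (hfib : StrictMonoOnFibers β π) : cycleOfWord (wordOfCycle β π) = π := by
  let Ψ := Equiv.ofBijective _ ⟨hπ.injective_pow_apply (Fin.last n), hπ.surjective_pow_apply _⟩
  have hΨ (x) : (π ^ ((Ψ.symm x : Fin (n + 1)) : ℕ)) (Fin.last n) = x := Ψ.apply_symm_apply x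
  have hsort : Tuple.sort (rotations (wordOfCycle β π)) = Ψ.symm := by
    have hmono : StrictMono (rotations (wordOfCycle β π) ∘ Ψ.symm) := by
      convert strictMono_toLex_labels_orbit hβ hlast hπ hfib using 2 with x
      simp [rotations_wordOfCycle hπ, hΨ]
    exact (Tuple.eq_sort_iff.2 ⟨hmono.monotone, fun i j hij he => absurd he (hmono hij).ne⟩).symm
  refine Equiv.ext fun x => ?_
  obtain ⟨t, rfl⟩ := Ψ.surjective x
  simp only [cycleOfWord, hsort, Equiv.trans_apply, symm_symm, symm_apply_apply, coe_addRight]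
  change (π ^ ((t + 1 : Fin (n + 1)) : ℕ)) (Fin.last n) = π ((π ^ (t : ℕ)) (Fin.last n))
  rw [hπ.pow_val_add, hπ.pow_val_one, Perm.mul_apply]

theorem wordOfCycle_cycleOfWord {c : Fin (n + 1) → ℕ} (hc : ∀ t ≠ 0, c t < c 0)
    (hβ : Monotone β) (hcβ : univ.val.map c = univ.val.map β) :
    wordOfCycle β (cycleOfWord c) = c := by
  funext t
  rw [wordOfCycle, cycleOfWord_pow_apply_last hc, ← comp_sort_rotations hβ hcβ]
  simp

end Orbits

section Snoc

variable {n : ℕ} {w β' : Fin n → ℕ} {M : ℕ}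

theorem map_cons_eq_map_snoc_iff :
    univ.val.map (Fin.cons M w : Fin (n + 1) → ℕ) = univ.val.map (Fin.snoc β' M) ↔
      univ.val.map w = univ.val.map β' := by
  rw [map_univ_cons, map_univ_snoc, Multiset.cons_inj_right]

theorem cons_lt_cons_zero (hM : ∀ v, β' v < M) (hw : univ.val.map w = univ.val.map β') :
    ∀ t ≠ 0, (Fin.cons M w : Fin (n + 1) → ℕ) t < (Fin.cons M w : Fin (n + 1) → ℕ) 0 := by
  intro t ht
  obtain ⟨v, rfl⟩ := Fin.exists_succ_eq.2 ht
  obtain ⟨u, -, hu⟩ := Multiset.mem_map.1 (hw ▸ Multiset.mem_map_of_mem w (mem_univ_val v))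
  simpa [← hu] using hM u

theorem snoc_lt_snoc_last (hM : ∀ v, β' v < M) :
    ∀ p ≠ Fin.last n,
      (Fin.snoc β' M : Fin (n + 1) → ℕ) p < (Fin.snoc β' M : Fin (n + 1) → ℕ) (Fin.last n) := by
  intro p hp
  obtain ⟨v, rfl⟩ := Fin.exists_castSucc_eq.2 hp
  simpa using hM v

noncomputable def cyclesEquivWords (hβ' : Monotone β') (hM : ∀ v, β' v < M) :
    {π : Perm (Fin (n + 1)) // IsCyclic' π ∧ StrictMonoOnFibers (Fin.snoc β' M) π} ≃
      {w : Fin n → ℕ // univ.val.map w = univ.val.map β'} :=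
  have hβ : Monotone (Fin.snoc β' M : Fin (n + 1) → ℕ) := monotone_snoc hβ' fun v => (hM v).le
  have hcons (π : Perm (Fin (n + 1))) :
      Fin.cons M (Fin.tail (wordOfCycle (Fin.snoc β' M) π)) = wordOfCycle (Fin.snoc β' M) π := by
    simpa [wordOfCycle_zero] using Fin.cons_self_tail (wordOfCycle (Fin.snoc β' M) π)
  { toFun π := ⟨Fin.tail (wordOfCycle (Fin.snoc β' M) π), by
      rw [← map_cons_eq_map_snoc_iff, hcons, map_wordOfCycle π.2.1]⟩
    invFun w := ⟨cycleOfWord (Fin.cons M w), isCyclic'_cycleOfWord _,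
      strictMonoOnFibers_cycleOfWord (cons_lt_cons_zero hM w.2) hβ
        (map_cons_eq_map_snoc_iff.2 w.2)⟩
    left_inv π := Subtype.ext <| by
      simp only [hcons]
      exact cycleOfWord_wordOfCycle hβ (snoc_lt_snoc_last hM) π.2.1 π.2.2
    right_inv w := Subtype.ext <| by
      simp only
      rw [wordOfCycle_cycleOfWord (cons_lt_cons_zero hM w.2) hβ (map_cons_eq_map_snoc_iff.2 w.2),
        Fin.tail_cons] }

end Snoc

section Descents

def blockIndex (I : Finset ℕ) (i : ℕ) : ℕ := #(I ∩ range i)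

theorem blockIndex_mono (I : Finset ℕ) : Monotone (blockIndex I) := fun _ _ h =>
  card_le_card (inter_subset_inter_left (range_subset_range.2 h))

theorem blockIndex_le (I : Finset ℕ) (i : ℕ) : blockIndex I i ≤ i :=
  (card_le_card inter_subset_right).trans (card_range i).le

theorem blockIndex_eq_blockIndex_add_one_iff {I : Finset ℕ} {i : ℕ} :
    blockIndex I i = blockIndex I (i + 1) ↔ i ∉ I := by
  unfold blockIndex
  rw [range_add_one]
  by_cases h : i ∈ I
  · rw [inter_insert_of_mem h, card_insert_of_notMem (by simp)]
    simp [h]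
  · rw [inter_insert_of_notMem h]
    simp [h]

theorem descSet_subset_iff {m : ℕ} (σ : Perm (Fin m)) (J : Finset ℕ) :
    descSet σ ⊆ J ↔ ∀ i (hi : i + 1 < m), i ∉ J → σ ⟨i, by omega⟩ < σ ⟨i + 1, hi⟩ := by
  simp only [descSet, descSeq, subset_iff, mem_filter, mem_range]
  constructor
  · intro h i hi hiJ
    refine lt_of_le_of_ne (not_lt.1 fun hlt => hiJ (h ⟨by omega, hi, hlt⟩)) ?_
    exact σ.injective.ne (by simp [Fin.ext_iff])
  · rintro h i ⟨-, hi, hlt⟩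
    by_contra hiJ
    exact (h i hi hiJ).not_gt (Fin.lt_def.2 hlt)

theorem descSet_subset_iff_strictMonoOnFibers {n : ℕ} (σ : Perm (Fin n)) (I : Finset ℕ) :
    descSet σ ⊆ I ↔ StrictMonoOnFibers (fun v : Fin n => blockIndex I v) σ := by
  rw [descSet_subset_iff, strictMonoOnFibers_iff fun _ _ h => blockIndex_mono I h]
  simp only [blockIndex_eq_blockIndex_add_one_iff]

/-- The label `n` of the last position exceeds all others, which leaves the descent at `n - 1`
unconstrained. -/
theorem descSet_inter_range_subset_iff {n : ℕ} (π : Perm (Fin (n + 1))) (I : Finset ℕ) :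
    descSet π ∩ range (n - 1) ⊆ I ↔
      StrictMonoOnFibers (Fin.snoc (fun v : Fin n => blockIndex I v) n : Fin (n + 1) → ℕ) π := by
  have hdesc : descSet π ∩ range (n - 1) ⊆ I ↔ descSet π ⊆ insert (n - 1) I := by
    have hrange : descSet π ⊆ range n := filter_subset _ _
    constructor
    · intro h i hi
      have := mem_range.1 (hrange hi)
      by_cases hin : i = n - 1
      · exact hin ▸ mem_insert_self _ _
      · exact mem_insert_of_mem (h (mem_inter.2 ⟨hi, mem_range.2 (by omega)⟩))
    · intro h i hi
      obtain ⟨hi, hir⟩ := mem_inter.1 hi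
      exact (mem_insert.1 (h hi)).resolve_left (by simp at hir; omega)
  rw [hdesc, descSet_subset_iff, strictMonoOnFibers_iff (monotone_snoc
    (fun _ _ h => blockIndex_mono I h) fun v => (blockIndex_le I v).trans v.isLt.le)]
  refine forall_congr' fun i => forall_congr' fun hi => ?_
  have hi' : (⟨i, by omega⟩ : Fin (n + 1)) = Fin.castSucc ⟨i, by omega⟩ := rfl
  rcases (show i + 1 < n ∨ i + 1 = n by omega) with h | h
  · have hi1 : (⟨i + 1, hi⟩ : Fin (n + 1)) = Fin.castSucc ⟨i + 1, h⟩ := rfl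
    rw [hi', hi1, Fin.snoc_castSucc, Fin.snoc_castSucc, blockIndex_eq_blockIndex_add_one_iff,
      mem_insert, or_iff_right (by omega)]
  · have hi1 : (⟨i + 1, hi⟩ : Fin (n + 1)) = Fin.last n := Fin.ext h
    have hne : blockIndex I i ≠ n := ((blockIndex_le I i).trans_lt (by omega)).ne
    rw [hi', hi1, Fin.snoc_castSucc, Fin.snoc_last, mem_insert]
    exact iff_of_true (fun hin => absurd (Or.inl (by omega)) hin) (fun heq => absurd heq hne)

end Descents

theorem stmt2_general (n : ℕ) (I : Finset ℕ) :
    Nat.card {π : Equiv.Perm (Fin (n + 1)) //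
        IsCyclic' π ∧ descSet π ∩ Finset.range (n - 1) ⊆ I}
      = Nat.card {σ : Equiv.Perm (Fin n) // descSet σ ⊆ I} := by
  have hmono : Monotone fun v : Fin n => blockIndex I v := fun _ _ h => blockIndex_mono I h
  have hlt (v : Fin n) : blockIndex I v < n := (blockIndex_le I v).trans_lt v.isLt
  simp_rw [descSet_inter_range_subset_iff, descSet_subset_iff_strictMonoOnFibers]
  exact Nat.card_congr ((cyclesEquivWords hmono hlt).trans (permsEquivWords hmono).symm)

theorem stmt2 (n : ℕ) (hn : 1 ≤ n) (I : Finset ℕ) (hI : I ⊆ Finset.range (n - 1)) :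
    Nat.card {π : Equiv.Perm (Fin (n + 1)) //
        IsCyclic' π ∧ descSet π ∩ Finset.range (n - 1) ⊆ I}
      = Nat.card {σ : Equiv.Perm (Fin n) // descSet σ ⊆ I} :=
  stmt2_general n I
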